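/- arXiv:1310.7696 — 2 statements merged into one kernel-verified Lean document; each statement's English description precedes it below -/
import Mathlib

section
/- If τ is a Γ₀-flake of dimension k+1 (every proper face of τ is Γ₀-good but τ is not), then every vertex p of τ has altitude D(p,τ) < 2·L(τ)²·Γ₀ / ℓ(τ), where L(τ) is the longest edge length and ℓ(τ) the shortest edge length of τ. -/
open Metric
open scoped Classical

variable {m : ℕ}

open scoped RealInnerProductSpace

/-- The altitude of a vertex `x` in the simplex with vertex set `s`. -/
noncomputable def altitude (x : EuclideanSpace ℝ (Fin m))
    (s : Finset (EuclideanSpace ℝ (Fin m))) : ℝ :=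
  Metric.infDist x (affineSpan ℝ ((s.erase x : Finset (EuclideanSpace ℝ (Fin m))) :
    Set (EuclideanSpace ℝ (Fin m))) : Set (EuclideanSpace ℝ (Fin m)))

/-- The longest edge length (diameter) of a simplex. -/
noncomputable def longEdge (s : Finset (EuclideanSpace ℝ (Fin m))) : ℝ :=
  Metric.diam (s : Set (EuclideanSpace ℝ (Fin m)))

/-- The shortest edge length of a simplex. -/
noncomputable def shortEdge (s : Finset (EuclideanSpace ℝ (Fin m))) : ℝ :=
  sInf {d : ℝ | ∃ u ∈ s, ∃ v ∈ s, u ≠ v ∧ d = dist u v}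

/-- The thickness of a simplex: `1` in dimension `0`, and otherwise the minimal altitude
divided by `j · L(σ)` where `j` is the dimension and `L(σ)` the longest edge length. -/
noncomputable def thickness (s : Finset (EuclideanSpace ℝ (Fin m))) : ℝ :=
  if s.card ≤ 1 then 1
  else sInf ((fun p => altitude p s) '' (s : Set (EuclideanSpace ℝ (Fin m)))) /
    (((s.card : ℝ) - 1) * longEdge s)

/-- A simplex is `Γ₀`-good if every `j`-face has thickness at least `Γ₀^j`. -/
def isGood (Γ₀ : ℝ) (s : Finset (EuclideanSpace ℝ (Fin m))) : Prop :=
  ∀ t ⊆ s, t.Nonempty → Γ₀ ^ (t.card - 1) ≤ thickness t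

/-- A `Γ₀`-flake: a `Γ₀`-bad simplex all of whose proper faces are `Γ₀`-good. -/
def isFlake (Γ₀ : ℝ) (s : Finset (EuclideanSpace ℝ (Fin m))) : Prop :=
  ¬ isGood Γ₀ s ∧ ∀ t ⊂ s, t.Nonempty → isGood Γ₀ t


lemma infDist_eq_dist_foot {s : Set (EuclideanSpace ℝ (Fin m))} {x y : EuclideanSpace ℝ (Fin m)}
    (hy : y ∈ s) (h : ∀ z ∈ s, ⟪x - y, z - y⟫ = 0) :
    Metric.infDist x s = dist x y := by
  refine le_antisymm (Metric.infDist_le_dist_of_mem hy) ?_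
  by_contra hlt
  push_neg at hlt
  obtain ⟨z, hz, hdz⟩ := (Metric.infDist_lt_iff ⟨y, hy⟩).1 hlt
  have hle : dist x y ≤ dist x z := by
    have h0 := h z hz
    have : dist x z ^ 2 = dist x y ^ 2 + dist y z ^ 2 := by
      rw [dist_eq_norm, dist_eq_norm, dist_eq_norm]
      have : x - z = (x - y) - (z - y) := by abel
      rw [this, norm_sub_sq_real (x - y) (z - y), h0]
      rw [show y - z = -(z-y) by abel, norm_neg]
      ring
    nlinarith [dist_nonneg (x := x) (y := y), dist_nonneg (x := x) (y := z), sq_nonneg (dist y z)]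
  linarith

/-- distance to affine span of `S` via orthogonal complement component. -/
lemma infDist_span_eq {S : Set (EuclideanSpace ℝ (Fin m))} {b : EuclideanSpace ℝ (Fin m)}
    (hb : b ∈ S) (x : EuclideanSpace ℝ (Fin m)) :
    Metric.infDist x (affineSpan ℝ S : Set (EuclideanSpace ℝ (Fin m))) =
      ‖x - b - (Submodule.orthogonalProjectionOnto (affineSpan ℝ S).direction (x - b) : EuclideanSpace ℝ (Fin m))‖ := by
  set W := (affineSpan ℝ S).direction
  set w : EuclideanSpace ℝ (Fin m) := (Submodule.orthogonalProjectionOnto W (x - b) : EuclideanSpace ℝ (Fin m))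
  have hbS : b ∈ affineSpan ℝ S := subset_affineSpan ℝ S hb
  have hyS : w + b ∈ affineSpan ℝ S := by
    have := AffineSubspace.vadd_mem_of_mem_direction
      (Submodule.orthogonalProjectionOnto W (x-b)).2 hbS
    simpa only [vadd_eq_add] using this
  rw [infDist_eq_dist_foot hyS ?ortho]
  · rw [dist_eq_norm]; congr 1; abel
  case ortho =>
    intro z hz
    have hzw : z - (w + b) ∈ W := by
      have := AffineSubspace.vsub_mem_direction hz hyS
      simpa [vsub_eq_sub] using this
    have hxy : x - (w + b) = x - b - w := by abel
    rw [hxy]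
    have hmem : x - b - w ∈ Wᗮ := Submodule.sub_starProjection_mem_orthogonal (K := W) (x - b)
    rw [real_inner_comm]
    exact (Submodule.mem_orthogonal W _).1 hmem _ hzw

private lemma inner_aux1 {P Q wq : EuclideanSpace ℝ (Fin m)} (h1 : ⟪P, wq⟫ = 0)
    (h2 : ⟪Q, wq⟫ = 0) (hQn : ‖Q‖ ≠ 0) :
    ⟪P - (⟪P, Q⟫ / ‖Q‖ ^ 2) • Q, Q + wq⟫ = 0 := by
  have := real_inner_self_eq_norm_sq Q
  rw [inner_add_right, inner_sub_left, inner_sub_left, real_inner_smul_left,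
    real_inner_smul_left, h1, h2, this]
  field_simp
  ring

private lemma inner_aux2 {P Q v : EuclideanSpace ℝ (Fin m)} (t : ℝ) (h1 : ⟪P, v⟫ = 0)
    (h2 : ⟪Q, v⟫ = 0) : ⟪P - t • Q, v⟫ = 0 := by
  rw [inner_sub_left, real_inner_smul_left, h1, h2]; ring

lemma infDist_span_insert_eq {S : Set (EuclideanSpace ℝ (Fin m))} {b : EuclideanSpace ℝ (Fin m)}
    (hb : b ∈ S) (p q : EuclideanSpace ℝ (Fin m))
    (hQ : q - b - (Submodule.orthogonalProjectionOnto (affineSpan ℝ S).direction (q - b) : EuclideanSpace ℝ (Fin m)) ≠ 0) :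
    Metric.infDist p (affineSpan ℝ (insert q S) : Set (EuclideanSpace ℝ (Fin m))) =
      ‖(p - b - (Submodule.orthogonalProjectionOnto (affineSpan ℝ S).direction (p - b) : EuclideanSpace ℝ (Fin m))) -
        ((⟪p - b - (Submodule.orthogonalProjectionOnto (affineSpan ℝ S).direction (p - b) : EuclideanSpace ℝ (Fin m)),
           q - b - (Submodule.orthogonalProjectionOnto (affineSpan ℝ S).direction (q - b) : EuclideanSpace ℝ (Fin m))⟫) /
          ‖q - b - (Submodule.orthogonalProjectionOnto (affineSpan ℝ S).direction (q - b) : EuclideanSpace ℝ (Fin m))‖ ^ 2) •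
        (q - b - (Submodule.orthogonalProjectionOnto (affineSpan ℝ S).direction (q - b) : EuclideanSpace ℝ (Fin m)))‖ := by
  set W := (affineSpan ℝ S).direction with hW
  set wp : EuclideanSpace ℝ (Fin m) := (Submodule.orthogonalProjectionOnto W (p - b) : EuclideanSpace ℝ (Fin m)) with hwp
  set wq : EuclideanSpace ℝ (Fin m) := (Submodule.orthogonalProjectionOnto W (q - b) : EuclideanSpace ℝ (Fin m)) with hwq
  set P : EuclideanSpace ℝ (Fin m) := p - b - wp with hP
  set Q : EuclideanSpace ℝ (Fin m) := q - b - wq with hQd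
  set t : ℝ := ⟪P, Q⟫ / ‖Q‖ ^ 2 with ht
  have hPW : P ∈ Wᗮ := Submodule.sub_starProjection_mem_orthogonal (K := W) (p - b)
  have hQW : Q ∈ Wᗮ := Submodule.sub_starProjection_mem_orthogonal (K := W) (q - b)
  have hbT : b ∈ affineSpan ℝ (insert q S) :=
    subset_affineSpan ℝ _ (Set.mem_insert_of_mem q hb)
  have hqT : q ∈ affineSpan ℝ (insert q S) := subset_affineSpan ℝ _ (Set.mem_insert q S)
  have hWle : W ≤ (affineSpan ℝ (insert q S)).direction :=
    AffineSubspace.direction_le (affineSpan_mono ℝ (Set.subset_insert q S))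
  have hQdir : Q ∈ (affineSpan ℝ (insert q S)).direction := by
    refine Submodule.sub_mem _ ?_ (hWle (Submodule.orthogonalProjectionOnto W (q - b)).2)
    have := AffineSubspace.vsub_mem_direction hqT hbT
    simpa only [vsub_eq_sub] using this
  have hvdir : wp + t • Q ∈ (affineSpan ℝ (insert q S)).direction :=
    Submodule.add_mem _ (hWle (Submodule.orthogonalProjectionOnto W (p - b)).2) (Submodule.smul_mem _ _ hQdir)
  have hyT : (wp + t • Q) + b ∈ affineSpan ℝ (insert q S) := by
    have := AffineSubspace.vadd_mem_of_mem_direction hvdir hbT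
    simpa only [vadd_eq_add] using this
  rw [infDist_eq_dist_foot hyT ?ortho]
  · rw [dist_eq_norm]; rw [show p - (wp + t • Q + b) = P - t • Q by rw [hP]; abel]
  case ortho =>
    intro z hz
    rw [show p - (wp + t • Q + b) = P - t • Q by rw [hP]; abel]
    have hzy : z - (wp + t • Q + b) ∈ (affineSpan ℝ (insert q S)).direction := by
      have := AffineSubspace.vsub_mem_direction hz hyT
      simpa only [vsub_eq_sub] using this
    rw [real_inner_comm]
    have hdirle : (affineSpan ℝ (insert q S)).direction ≤ (ℝ ∙ (P - t • Q))ᗮ := by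
      rw [direction_affineSpan, vectorSpan_eq_span_vsub_set_right ℝ
        (Set.mem_insert_of_mem q hb : b ∈ insert q S)]
      rw [Submodule.span_le]
      rintro _ ⟨u, hu, rfl⟩
      rw [SetLike.mem_coe, Submodule.mem_orthogonal_singleton_iff_inner_right]
      show ⟪P - t • Q, u - b⟫ = 0
      have hQn : ‖Q‖ ≠ 0 := norm_ne_zero_iff.2 hQ
      rcases hu with rfl | huS
      · rw [show u - b = Q + wq by rw [hQd]; abel]
        have h1 : ⟪P, wq⟫ = 0 := (Submodule.mem_orthogonal' W P).1 hPW _ (Submodule.orthogonalProjectionOnto W (u - b)).2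
        have h2 : ⟪Q, wq⟫ = 0 := (Submodule.mem_orthogonal' W Q).1 hQW _ (Submodule.orthogonalProjectionOnto W (u - b)).2
        exact inner_aux1 h1 h2 hQn
      · have huW : u - b ∈ W := by
          have := AffineSubspace.vsub_mem_direction (subset_affineSpan ℝ S huS) (subset_affineSpan ℝ S hb)
          simpa only [vsub_eq_sub, ← hW] using this
        have h1 : ⟪P, u - b⟫ = 0 := (Submodule.mem_orthogonal' W P).1 hPW _ huW
        have h2 : ⟪Q, u - b⟫ = 0 := (Submodule.mem_orthogonal' W Q).1 hQW _ huW
        exact inner_aux2 t h1 h2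
    exact Submodule.mem_orthogonal_singleton_iff_inner_left.1 (hdirle hzy)

private lemma norm_alg {P Q : EuclideanSpace ℝ (Fin m)} (hP : ‖P‖ ≠ 0) (hQ : ‖Q‖ ≠ 0) :
    ‖P - (⟪P, Q⟫ / ‖Q‖ ^ 2) • Q‖ * ‖Q‖ = ‖Q - (⟪Q, P⟫ / ‖P‖ ^ 2) • P‖ * ‖P‖ := by
  have key : ∀ (A B : EuclideanSpace ℝ (Fin m)), ‖B‖ ≠ 0 →
      (‖A - (⟪A, B⟫ / ‖B‖ ^ 2) • B‖ * ‖B‖) ^ 2 = ‖A‖ ^ 2 * ‖B‖ ^ 2 - ⟪A, B⟫ ^ 2 := by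
    intro A B hB
    rw [mul_pow, norm_sub_sq_real, inner_smul_right, norm_smul, Real.norm_eq_abs, mul_pow, sq_abs]
    field_simp
    ring
  have e1 := key P Q hQ
  have e2 := key Q P hP
  have hc : (⟪Q, P⟫ : ℝ) = ⟪P, Q⟫ := real_inner_comm P Q
  have h1 : 0 ≤ ‖P - (⟪P, Q⟫ / ‖Q‖ ^ 2) • Q‖ * ‖Q‖ := by positivity
  have h2 : 0 ≤ ‖Q - (⟪Q, P⟫ / ‖P‖ ^ 2) • P‖ * ‖P‖ := by positivity
  have hsq : (‖P - (⟪P, Q⟫ / ‖Q‖ ^ 2) • Q‖ * ‖Q‖) ^ 2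
      = (‖Q - (⟪Q, P⟫ / ‖P‖ ^ 2) • P‖ * ‖P‖) ^ 2 := by rw [e1, e2, hc]; ring
  exact (sq_eq_sq₀ h1 h2).1 hsq

lemma infDist_mul_comm {S : Set (EuclideanSpace ℝ (Fin m))} (hS : S.Nonempty)
    (p q : EuclideanSpace ℝ (Fin m))
    (hP : Metric.infDist p (affineSpan ℝ S : Set (EuclideanSpace ℝ (Fin m))) ≠ 0)
    (hQ : Metric.infDist q (affineSpan ℝ S : Set (EuclideanSpace ℝ (Fin m))) ≠ 0) :
    Metric.infDist p (affineSpan ℝ (insert q S) : Set (EuclideanSpace ℝ (Fin m))) *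
        Metric.infDist q (affineSpan ℝ S : Set (EuclideanSpace ℝ (Fin m)))
      = Metric.infDist q (affineSpan ℝ (insert p S) : Set (EuclideanSpace ℝ (Fin m))) *
        Metric.infDist p (affineSpan ℝ S : Set (EuclideanSpace ℝ (Fin m))) := by
  obtain ⟨b, hb⟩ := hS
  rw [infDist_span_eq hb p, infDist_span_eq hb q] at *
  rw [infDist_span_insert_eq hb p q (norm_ne_zero_iff.1 hQ),
    infDist_span_insert_eq hb q p (norm_ne_zero_iff.1 hP)]
  exact norm_alg hP hQ

lemma altitude_nonneg (x : EuclideanSpace ℝ (Fin m)) (s : Finset (EuclideanSpace ℝ (Fin m))) :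
    0 ≤ Metric.infDist x (affineSpan ℝ ((s.erase x : Finset (EuclideanSpace ℝ (Fin m))) :
      Set (EuclideanSpace ℝ (Fin m))) : Set (EuclideanSpace ℝ (Fin m))) :=
  Metric.infDist_nonneg

/-- altitude is at most the distance to any other vertex -/
lemma altitude_le_dist {x y : EuclideanSpace ℝ (Fin m)} {s : Finset (EuclideanSpace ℝ (Fin m))}
    (hy : y ∈ s.erase x) :
    Metric.infDist x (affineSpan ℝ ((s.erase x : Finset (EuclideanSpace ℝ (Fin m))) :
        Set (EuclideanSpace ℝ (Fin m))) : Set (EuclideanSpace ℝ (Fin m))) ≤ dist x y :=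
  Metric.infDist_le_dist_of_mem (subset_affineSpan ℝ _ (Finset.mem_coe.2 hy))

lemma altitude_eq (x : EuclideanSpace ℝ (Fin m)) (s : Finset (EuclideanSpace ℝ (Fin m))) :
    altitude x s = Metric.infDist x (affineSpan ℝ ((s.erase x : Finset (EuclideanSpace ℝ (Fin m))) :
      Set (EuclideanSpace ℝ (Fin m))) : Set (EuclideanSpace ℝ (Fin m))) := rfl

lemma good_altitude_lower {Γ₀ : ℝ} (hΓ0 : 0 < Γ₀) {t : Finset (EuclideanSpace ℝ (Fin m))}
    (ht : isGood Γ₀ t) (h2 : 2 ≤ t.card) (hL : 0 < longEdge t) {x : EuclideanSpace ℝ (Fin m)}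
    (hx : x ∈ t) :
    Γ₀ ^ (t.card - 1) * (((t.card : ℝ) - 1) * longEdge t) ≤ altitude x t := by
  have hth := ht t subset_rfl ⟨x, hx⟩
  rw [thickness, if_neg (by omega)] at hth
  have hD : 0 < ((t.card : ℝ) - 1) * longEdge t := by
    have h2' : (2:ℝ) ≤ (t.card : ℝ) := by exact_mod_cast h2
    nlinarith
  have h1 : Γ₀ ^ (t.card - 1) * (((t.card : ℝ) - 1) * longEdge t)
      ≤ sInf ((fun p => altitude p t) '' ↑t) := (le_div_iff₀ hD).1 hth
  refine h1.trans (csInf_le ?_ ?_)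
  · exact (t.finite_toSet.image _).bddBelow
  · exact ⟨x, hx, rfl⟩

set_option maxHeartbeats 1000000 in
/-- Flakes have small altitude -/
theorem flake_altitude_bound {m k : ℕ} (τ : Finset (EuclideanSpace ℝ (Fin m))) (Γ₀ : ℝ)
    (hΓ0 : 0 < Γ₀) (hΓ1 : Γ₀ ≤ 1) (hcard : τ.card = k + 2) (hk : 2 ≤ k + 1)
    (hflake : isFlake Γ₀ τ) :
    ∀ p ∈ τ, altitude p τ < 2 * longEdge τ ^ 2 * Γ₀ / shortEdge τ := by
  intro p hp
  have hk1 : 1 ≤ k := by omega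
  have hk1R : (1:ℝ) ≤ (k:ℝ) := by exact_mod_cast hk1
  set L := longEdge τ with hLdef
  set l := shortEdge τ with hldef
  clear_value L l
  have hbdd : Bornology.IsBounded (↑τ : Set (EuclideanSpace ℝ (Fin m))) :=
    τ.finite_toSet.isBounded
  have hdist_le : ∀ x ∈ τ, ∀ y ∈ τ, dist x y ≤ L := fun x hx y hy => by
    rw [hLdef, longEdge]; exact Metric.dist_le_diam_of_mem hbdd hx hy
  have hcard2 : 1 < τ.card := by omega
  obtain ⟨u0, hu0, v0, hv0, huv0⟩ := Finset.one_lt_card.1 hcard2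
  have hDfin : {d : ℝ | ∃ u ∈ τ, ∃ v ∈ τ, u ≠ v ∧ d = dist u v}.Finite := by
    have hsub : {d : ℝ | ∃ u ∈ τ, ∃ v ∈ τ, u ≠ v ∧ d = dist u v} ⊆
        (fun x : EuclideanSpace ℝ (Fin m) × EuclideanSpace ℝ (Fin m) => dist x.1 x.2) ''
          ((↑τ : Set (EuclideanSpace ℝ (Fin m))) ×ˢ ↑τ) := by
      rintro d ⟨u, hu, v, hv, -, rfl⟩
      exact ⟨(u, v), ⟨hu, hv⟩, rfl⟩
    exact ((τ.finite_toSet.prod τ.finite_toSet).image _).subset hsub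
  have hDne : {d : ℝ | ∃ u ∈ τ, ∃ v ∈ τ, u ≠ v ∧ d = dist u v}.Nonempty :=
    ⟨dist u0 v0, u0, hu0, v0, hv0, huv0, rfl⟩
  have hlD : l ∈ {d : ℝ | ∃ u ∈ τ, ∃ v ∈ τ, u ≠ v ∧ d = dist u v} := by
    rw [hldef, shortEdge]; exact hDne.csInf_mem hDfin
  obtain ⟨ul, hul, vl, hvl, huvl, hleq⟩ := hlD
  have hlpos : 0 < l := by rw [hleq]; exact dist_pos.2 huvl
  have hl_le : ∀ u ∈ τ, ∀ v ∈ τ, u ≠ v → l ≤ dist u v := fun u hu v hv huv => by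
    rw [hldef, shortEdge]; exact csInf_le hDfin.bddBelow ⟨u, hu, v, hv, huv, rfl⟩
  have hLpos : 0 < L := lt_of_lt_of_le (dist_pos.2 huv0) (hdist_le _ hu0 _ hv0)
  have hlL : l ≤ L := by rw [hleq]; exact hdist_le _ hul _ hvl
  have hcard_erase : ∀ x ∈ τ, (τ.erase x).card = k + 1 := fun x hx => by
    rw [Finset.card_erase_of_mem hx, hcard]
    omega
  have hfacet : ∀ x ∈ τ, l ≤ longEdge (τ.erase x) ∧ 0 < longEdge (τ.erase x) := by
    intro x hx
    have hc : 1 < (τ.erase x).card := by rw [hcard_erase x hx]; omega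
    obtain ⟨u, hu, v, hv, huv⟩ := Finset.one_lt_card.1 hc
    have hb : Bornology.IsBounded (↑(τ.erase x) : Set (EuclideanSpace ℝ (Fin m))) :=
      (τ.erase x).finite_toSet.isBounded
    have h1 : dist u v ≤ longEdge (τ.erase x) := Metric.dist_le_diam_of_mem hb hu hv
    have h2 : l ≤ dist u v :=
      hl_le u (Finset.mem_of_mem_erase hu) v (Finset.mem_of_mem_erase hv) huv
    exact ⟨h2.trans h1, lt_of_lt_of_le (dist_pos.2 huv) h1⟩
  have hgoodfacet : ∀ x ∈ τ, isGood Γ₀ (τ.erase x) := fun x hx =>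
    hflake.2 _ (Finset.erase_ssubset hx)
      (Finset.card_pos.1 (by rw [hcard_erase x hx]; omega))
  have hfacetcast : ((k + 1 : ℕ) : ℝ) - 1 = (k : ℝ) := by push_cast; ring
  -- altitude lower bound on facets, phrased conveniently
  have hfacet_alt : ∀ x ∈ τ, ∀ y ∈ τ.erase x,
      Γ₀ ^ k * ((k : ℝ) * longEdge (τ.erase x)) ≤ altitude y (τ.erase x) := by
    intro x hx y hy
    have := good_altitude_lower hΓ0 (hgoodfacet x hx)
      (by rw [hcard_erase x hx]; omega) (hfacet x hx).2 hy
    rwa [hcard_erase x hx, Nat.add_sub_cancel, hfacetcast] at this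
  -- k * Γ₀ ^ k ≤ 1
  have hkΓ : (k : ℝ) * Γ₀ ^ k ≤ 1 := by
    have hc1 : 1 < (τ.erase p).card := by rw [hcard_erase p hp]; omega
    obtain ⟨x, hx, y, hy, hxy⟩ := Finset.one_lt_card.1 hc1
    have hlow := hfacet_alt p hp x hx
    have hup : altitude x (τ.erase p) ≤ longEdge (τ.erase p) := by
      have hy' : y ∈ (τ.erase p).erase x := Finset.mem_erase.2 ⟨Ne.symm hxy, hy⟩
      refine (Metric.infDist_le_dist_of_mem (subset_affineSpan ℝ _ (Finset.mem_coe.2 hy'))).trans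
        (Metric.dist_le_diam_of_mem ((τ.erase p).finite_toSet.isBounded) hx hy)
    have hL' := (hfacet p hp).2
    nlinarith [pow_pos hΓ0 k]
  -- find the minimizing vertex q
  obtain ⟨t, hts, htne, hlt⟩ := by
    have hbad := hflake.1
    rw [isGood] at hbad; push_neg at hbad; exact hbad
  have hteq : t = τ := by
    by_contra hne
    exact absurd (hflake.2 t (ssubset_of_subset_of_ne hts hne) htne t subset_rfl htne)
      (not_le.2 hlt)
  rw [hteq] at hlt
  rw [thickness, if_neg (by omega), hcard, ← hLdef] at hlt
  have hcastc : ((k + 2 : ℕ) : ℝ) - 1 = (k : ℝ) + 1 := by push_cast; ring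
  rw [hcastc] at hlt
  have hDpos : 0 < ((k : ℝ) + 1) * L := mul_pos (by linarith) hLpos
  have hsInf_lt : sInf ((fun p => altitude p τ) '' ↑τ) < Γ₀ ^ (k + 1) * (((k : ℝ) + 1) * L) := by
    have := (div_lt_iff₀ hDpos).1 hlt
    calc sInf ((fun p => altitude p τ) '' ↑τ)
        < Γ₀ ^ (k + 2 - 1) * (((k : ℝ) + 1) * L) := this
      _ = Γ₀ ^ (k + 1) * (((k : ℝ) + 1) * L) := by norm_num
  obtain ⟨q, hq, hqeq⟩ := Set.Nonempty.csInf_mem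
    (⟨altitude p τ, p, hp, rfl⟩ : ((fun p => altitude p τ) '' (↑τ : Set (EuclideanSpace ℝ (Fin m)))).Nonempty)
    (τ.finite_toSet.image _)
  have hAq : altitude q τ < Γ₀ ^ (k + 1) * (((k : ℝ) + 1) * L) := by
    have h := hsInf_lt
    rw [← hqeq] at h
    exact h
  have hRpos : 0 < 2 * L ^ 2 * Γ₀ / l :=
    div_pos (mul_pos (mul_pos two_pos (pow_pos hLpos 2)) hΓ0) hlpos
  by_cases hpq : p = q
  · subst hpq
    refine hAq.trans_le ?_
    rw [le_div_iff₀ hlpos]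
    have hΓk1 : Γ₀ ^ k ≤ 1 := pow_le_one₀ hΓ0.le hΓ1
    rw [pow_succ Γ₀ k]
    nlinarith [mul_nonneg (mul_nonneg (mul_nonneg (sub_nonneg.2 hkΓ) hΓ0.le) hLpos.le) hlpos.le,
      mul_nonneg (mul_nonneg (mul_nonneg (sub_nonneg.2 hΓk1) hΓ0.le) hLpos.le) hlpos.le,
      mul_nonneg (sub_nonneg.2 hlL) (mul_pos hΓ0 hLpos).le]
  · have hqτp : q ∈ τ.erase p := Finset.mem_erase.2 ⟨fun h => hpq h.symm, hq⟩
    have hpτq : p ∈ τ.erase q := Finset.mem_erase.2 ⟨hpq, hp⟩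
    set S : Finset (EuclideanSpace ℝ (Fin m)) := (τ.erase p).erase q with hSdef
    have hScomm : (τ.erase q).erase p = S := by rw [hSdef, Finset.erase_right_comm]
    have hco1 : (↑(τ.erase p) : Set (EuclideanSpace ℝ (Fin m))) = insert q ↑S := by
      conv_lhs => rw [← Finset.insert_erase hqτp]
      rw [Finset.coe_insert]
    have hco2 : (↑(τ.erase q) : Set (EuclideanSpace ℝ (Fin m))) = insert p ↑S := by
      conv_lhs => rw [← Finset.insert_erase hpτq]
      rw [Finset.coe_insert, hScomm]
    have hSne : (↑S : Set (EuclideanSpace ℝ (Fin m))).Nonempty := by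
      rw [Finset.coe_nonempty]
      refine Finset.card_pos.1 ?_
      rw [hSdef, Finset.card_erase_of_mem hqτp, hcard_erase p hp]
      omega
    have e1 : altitude p τ = Metric.infDist p
        (affineSpan ℝ (insert q (↑S : Set (EuclideanSpace ℝ (Fin m)))) :
          Set (EuclideanSpace ℝ (Fin m))) := by
      rw [altitude_eq, hco1]
    have e2 : altitude q τ = Metric.infDist q
        (affineSpan ℝ (insert p (↑S : Set (EuclideanSpace ℝ (Fin m)))) :
          Set (EuclideanSpace ℝ (Fin m))) := by
      rw [altitude_eq, hco2]
    have e3 : altitude q (τ.erase p) = Metric.infDist q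
        (affineSpan ℝ (↑S : Set (EuclideanSpace ℝ (Fin m))) : Set (EuclideanSpace ℝ (Fin m))) := by
      rw [altitude_eq]
    have hQlow : Γ₀ ^ k * ((k : ℝ) * l) ≤ Metric.infDist q
        (affineSpan ℝ (↑S : Set (EuclideanSpace ℝ (Fin m))) : Set (EuclideanSpace ℝ (Fin m))) := by
      rw [← e3]
      refine le_trans ?_ (hfacet_alt p hp q hqτp)
      have h1 := (hfacet p hp).1
      have hg := pow_pos hΓ0 k
      have hk0 : (0:ℝ) ≤ (k:ℝ) := by positivity
      nlinarith [mul_nonneg (mul_nonneg hg.le hk0) (sub_nonneg.2 h1)]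
    have hQpos : 0 < Metric.infDist q
        (affineSpan ℝ (↑S : Set (EuclideanSpace ℝ (Fin m))) : Set (EuclideanSpace ℝ (Fin m))) := by
      refine lt_of_lt_of_le ?_ hQlow
      exact mul_pos (pow_pos hΓ0 k) (mul_pos (lt_of_lt_of_le one_pos hk1R) hlpos)
    by_cases hP0 : Metric.infDist p
        (affineSpan ℝ (↑S : Set (EuclideanSpace ℝ (Fin m))) : Set (EuclideanSpace ℝ (Fin m))) = 0
    · have hclosed : IsClosed (affineSpan ℝ (↑S : Set (EuclideanSpace ℝ (Fin m))) :
          Set (EuclideanSpace ℝ (Fin m))) :=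
        (affineSpan ℝ (↑S : Set (EuclideanSpace ℝ (Fin m)))).closed_of_finiteDimensional
      have hspanne : (affineSpan ℝ (↑S : Set (EuclideanSpace ℝ (Fin m))) :
          Set (EuclideanSpace ℝ (Fin m))).Nonempty := by
        obtain ⟨y, hy⟩ := hSne
        exact ⟨y, subset_affineSpan ℝ _ hy⟩
      have hpmem : p ∈ affineSpan ℝ (↑S : Set (EuclideanSpace ℝ (Fin m))) :=
        (IsClosed.mem_iff_infDist_zero hclosed hspanne).2 hP0
      have hz : altitude p τ = 0 := by
        rw [e1]
        exact Metric.infDist_zero_of_mem (affineSpan_mono ℝ (Set.subset_insert q ↑S) hpmem)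
      rw [hz]; exact hRpos
    · have hident := infDist_mul_comm hSne p q hP0 (ne_of_gt hQpos)
      have hPd0 : (0:ℝ) ≤ Metric.infDist p
          (affineSpan ℝ (↑S : Set (EuclideanSpace ℝ (Fin m))) :
            Set (EuclideanSpace ℝ (Fin m))) := Metric.infDist_nonneg
      have hPub : Metric.infDist p
          (affineSpan ℝ (↑S : Set (EuclideanSpace ℝ (Fin m))) :
            Set (EuclideanSpace ℝ (Fin m))) ≤ L := by
        obtain ⟨y, hy⟩ := hSne
        have hyτ : y ∈ τ := Finset.mem_of_mem_erase (Finset.mem_of_mem_erase hy)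
        exact (Metric.infDist_le_dist_of_mem (subset_affineSpan ℝ _ hy)).trans
          (hdist_le p hp y hyτ)
      have hids : altitude p τ * Metric.infDist q
          (affineSpan ℝ (↑S : Set (EuclideanSpace ℝ (Fin m))) :
            Set (EuclideanSpace ℝ (Fin m)))
          = altitude q τ * Metric.infDist p
          (affineSpan ℝ (↑S : Set (EuclideanSpace ℝ (Fin m))) :
            Set (EuclideanSpace ℝ (Fin m))) := by
        rw [e1, e2]; exact hident
      have hAq0 : 0 ≤ altitude q τ := Metric.infDist_nonneg
      set Pd := Metric.infDist p
        (affineSpan ℝ (↑S : Set (EuclideanSpace ℝ (Fin m))) : Set (EuclideanSpace ℝ (Fin m))) with hPdd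
      set Qd := Metric.infDist q
        (affineSpan ℝ (↑S : Set (EuclideanSpace ℝ (Fin m))) : Set (EuclideanSpace ℝ (Fin m))) with hQdd
      set Ap := altitude p τ with hApd
      set Aq := altitude q τ with hAqd
      clear_value Pd Qd Ap Aq
      have hrw : Ap * l * Qd = l * (Aq * Pd) := by
        rw [mul_right_comm, hids]; ring
      clear hident hids e1 e2 e3 hP0 hco1 hco2 hScomm hqeq hlt hsInf_lt hflake hgoodfacet hfacet_alt hl_le hdist_le hfacet
      have s1 : l * (Aq * Pd) ≤ l * (Aq * L) := by
        nlinarith [mul_nonneg (mul_nonneg hlpos.le hAq0) (sub_nonneg.2 hPub)]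
      have s2 : l * (Aq * L) < l * (Γ₀ ^ (k + 1) * (((k : ℝ) + 1) * L) * L) := by
        have := mul_lt_mul_of_pos_right hAq hLpos
        exact mul_lt_mul_of_pos_left this hlpos
      have s3 : l * (Γ₀ ^ (k + 1) * (((k : ℝ) + 1) * L) * L) ≤ 2 * L ^ 2 * Γ₀ * Qd := by
        have h2 : 2 * L ^ 2 * Γ₀ * (Γ₀ ^ k * ((k : ℝ) * l)) ≤ 2 * L ^ 2 * Γ₀ * Qd :=
          mul_le_mul_of_nonneg_left hQlow
            (mul_nonneg (mul_nonneg (by norm_num) (sq_nonneg L)) hΓ0.le)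
        refine le_trans ?_ h2
        rw [pow_succ]
        nlinarith [mul_nonneg (mul_nonneg (mul_nonneg (sub_nonneg.2 hk1R)
          (mul_nonneg (pow_pos hΓ0 k).le hΓ0.le)) (sq_nonneg L)) hlpos.le]
      have final : Ap * l < 2 * L ^ 2 * Γ₀ := by
        refine lt_of_mul_lt_mul_right ?_ hQpos.le
        rw [hrw]
        exact lt_of_le_of_lt s1 (lt_of_lt_of_le s2 s3)
      rw [lt_div_iff₀ hlpos]
      exact final
end

section
/- Symmetry of forbidden configurations: let τ = p * σ ... if all pairwise distances between vertices of σ to a center C satisfy |d(u,C) - d(v,C)| ≤ δ₀·ℓ(σ), the facet σ_p opposite p in τ is Γ₀^k-thick, shortest edges of σ and facets are at least μ̄'ε', and R ≤ ℓ(σ_p)/μ̄', δ₀ ≤ 1/4, then there is a circumscribing ball B(C_p, R_p) for σ_p with ‖C_p - C‖ ≤ 3δ₀R/(μ̄'Γ₀^k), hence R_p ≤ (1 + 3δ₀/(μ̄'Γ₀^k))R and the distance from p to ∂B(C_p,R_p) is at most (6δ₀/(μ̄'²Γ₀^k))·ℓ(σ_p). -/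
open Metric
open scoped Classical

variable {m : ℕ}

open scoped RealInnerProductSpace

lemma dist_sq_add_smul {m : ℕ} (u C n : EuclideanSpace ℝ (Fin m)) (t : ℝ) :
    dist u (C + t • n) ^ 2 = dist u C ^ 2 - 2*t*(⟪n, u - C⟫) + t^2 * ‖n‖^2 := by
  rw [dist_eq_norm, dist_eq_norm, sub_add_eq_sub_sub, norm_sub_sq_real,
    real_inner_smul_right, norm_smul, real_inner_comm]
  simp [mul_pow, sq_abs]
  ring


set_option maxHeartbeats 1000000 in
/-- Symmetry of forbidden configurations: if all vertices of `σ = τ∖{q}` lie on the sphere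
`∂B(C,R)`, `q` lies within `δ₀μ̄'ε'` of it, the facets of `τ` are `Γ₀^k`-thick, edges are at
least `μ̄'ε'`, `R ≤ ℓ(σ_p)/μ̄'` and `δ₀ ≤ 1/4`, then for every vertex `p` of `τ` there is a
ball `B(C_p,R_p)` circumscribing the facet `σ_p = τ∖{p}` with `‖C_p - C‖ ≤ 3δ₀R/(μ̄'Γ₀^k)`,
`R_p ≤ (1 + 3δ₀/(μ̄'Γ₀^k))·R` and `dist(p, ∂B(C_p,R_p)) ≤ (6δ₀/(μ̄'²Γ₀^k))·ℓ(σ_p)`. -/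
theorem forbidden_configuration_symmetry {m k : ℕ}
    (τ : Finset (EuclideanSpace ℝ (Fin m))) (q : EuclideanSpace ℝ (Fin m)) (hq : q ∈ τ)
    (C : EuclideanSpace ℝ (Fin m)) (R δ₀ μ' Γ₀ ε' : ℝ)
    (hcard : τ.card = k + 2)
    (hδ0 : 0 ≤ δ₀) (hδ4 : δ₀ ≤ 1 / 4) (hμ : 0 < μ') (hμ1 : μ' ≤ 1)
    (hΓ : 0 < Γ₀) (hΓ1 : Γ₀ ≤ 1) (hε : 0 < ε')
    (hcirc : ∀ u ∈ τ.erase q, dist u C = R) (hR : R < ε')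
    (hqC : |dist q C - R| ≤ δ₀ * μ' * ε')
    (hsep : ∀ u ∈ τ, ∀ v ∈ τ, u ≠ v → μ' * ε' ≤ dist u v)
    (hthick : ∀ p ∈ τ, Γ₀ ^ k ≤ thickness (τ.erase p))
    (hRl : ∀ p ∈ τ, R ≤ shortEdge (τ.erase p) / μ') :
    ∀ p ∈ τ, ∃ (Cp : EuclideanSpace ℝ (Fin m)) (Rp : ℝ),
      (∀ u ∈ τ.erase p, dist u Cp = Rp) ∧
      dist Cp C ≤ 3 * δ₀ * R / (μ' * Γ₀ ^ k) ∧
      Rp ≤ (1 + 3 * δ₀ / (μ' * Γ₀ ^ k)) * R ∧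
      |dist p Cp - Rp| ≤ (6 * δ₀ / (μ' ^ 2 * Γ₀ ^ k)) * shortEdge (τ.erase p) := by
  have hG : (0:ℝ) < Γ₀ ^ k := pow_pos hΓ k
  have hGle1 : Γ₀ ^ k ≤ 1 := pow_le_one₀ hΓ.le hΓ1
  have hme : 0 < μ' * ε' := mul_pos hμ hε
  -- the dimension k is at least 1
  have hk1 : 1 ≤ k := by
    by_contra hk
    have hk0 : k = 0 := by omega
    have hcq : (τ.erase q).card = 1 := by
      rw [Finset.card_erase_of_mem hq, hcard]; omega
    obtain ⟨u, hu⟩ := Finset.card_eq_one.mp hcq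
    have huq : u ∈ τ.erase q := hu ▸ Finset.mem_singleton_self u
    have huτ : u ∈ τ := Finset.mem_of_mem_erase huq
    have hune : u ≠ q := Finset.ne_of_mem_erase huq
    have hse : shortEdge (τ.erase q) = 0 := by
      have hset : {d : ℝ | ∃ a ∈ τ.erase q, ∃ b ∈ τ.erase q, a ≠ b ∧ d = dist a b} = ∅ := by
        ext d
        simp only [hu, Finset.mem_singleton, Set.mem_setOf_eq, Set.mem_empty_iff_false,
          iff_false, not_exists]
        rintro a ⟨rfl, b, rfl, hab, -⟩
        exact hab rfl
      rw [shortEdge, hset, Real.sInf_empty]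
    have hR0 : R ≤ 0 := by
      have := hRl q hq
      rw [hse, zero_div] at this
      exact this
    have hRR : R = 0 := le_antisymm hR0 ((hcirc u huq) ▸ dist_nonneg)
    have huC : dist u C = 0 := by rw [hcirc u huq, hRR]
    have hqCle : dist q C ≤ δ₀ * μ' * ε' := by
      rw [hRR, sub_zero] at hqC
      exact (abs_le.mp hqC).2
    have hqu : dist q u ≤ δ₀ * μ' * ε' := by
      have huC' : u = C := by rwa [dist_eq_zero] at huC
      rw [huC']; exact hqCle
    have hsp := hsep q hq u huτ (Ne.symm hune)
    have h4 : δ₀ * (μ' * ε') ≤ (1/4) * (μ' * ε') := mul_le_mul_of_nonneg_right hδ4 hme.le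
    linarith
  intro p hp
  set σ : Finset (EuclideanSpace ℝ (Fin m)) := τ.erase p with hσdef
  have hσsub : σ ⊆ τ := Finset.erase_subset p τ
  have hσcard : σ.card = k + 1 := by
    rw [hσdef, Finset.card_erase_of_mem hp, hcard]
    omega
  have h2card : 1 < σ.card := by omega
  obtain ⟨u₁, hu₁, v₁, hv₁, huv₁⟩ := Finset.one_lt_card.mp h2card
  set s := shortEdge σ with hsdef
  have hseq : s = sInf {d : ℝ | ∃ u ∈ σ, ∃ v ∈ σ, u ≠ v ∧ d = dist u v} := rfl
  have hDlb : ∀ d ∈ {d : ℝ | ∃ u ∈ σ, ∃ v ∈ σ, u ≠ v ∧ d = dist u v}, μ' * ε' ≤ d := by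
    rintro d ⟨a, ha, b, hb, hab, rfl⟩
    exact hsep a (hσsub ha) b (hσsub hb) hab
  have hslow : μ' * ε' ≤ s := by
    rw [hseq]
    exact le_csInf ⟨dist u₁ v₁, u₁, hu₁, v₁, hv₁, huv₁, rfl⟩ hDlb
  have hspos : 0 < s := lt_of_lt_of_le hme hslow
  have hsle : s ≤ dist u₁ v₁ := by
    rw [hseq]
    exact csInf_le ⟨μ' * ε', hDlb⟩ ⟨u₁, hu₁, v₁, hv₁, huv₁, rfl⟩
  have hμR : μ' * R ≤ s := by
    have h := hRl p hp
    rw [← hσdef, ← hsdef, le_div_iff₀ hμ] at h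
    linarith
  by_cases hpq : p = q
  · -- the easy case: take the original ball
    subst hpq
    refine ⟨C, R, hcirc, ?_, ?_, ?_⟩
    · rw [dist_self]
      apply div_nonneg _ (mul_pos hμ hG).le
      have hRnn : 0 ≤ R := (hcirc u₁ hu₁) ▸ dist_nonneg
      have := mul_nonneg (mul_nonneg (by norm_num : (0:ℝ) ≤ 3) hδ0) hRnn
      linarith
    · have hRnn : 0 ≤ R := (hcirc u₁ hu₁) ▸ dist_nonneg
      have hx : 0 ≤ 3 * δ₀ / (μ' * Γ₀ ^ k) := div_nonneg (by linarith) (mul_pos hμ hG).le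
      linarith [mul_nonneg hx hRnn]
    · have h1 : |dist p C - R| ≤ δ₀ * s := by
        calc |dist p C - R| ≤ δ₀ * μ' * ε' := hqC
        _ = δ₀ * (μ' * ε') := by ring
        _ ≤ δ₀ * s := mul_le_mul_of_nonneg_left hslow hδ0
      have hden : 0 < μ' ^ 2 * Γ₀ ^ k := by positivity
      have h2 : δ₀ * s ≤ 6 * δ₀ / (μ' ^ 2 * Γ₀ ^ k) * s := by
        rw [div_mul_eq_mul_div, le_div_iff₀ hden]
        have hμsq : μ' ^ 2 * Γ₀ ^ k ≤ 1 := by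
          have hh1 : μ' ^ 2 ≤ 1 := pow_le_one₀ hμ.le hμ1
          calc μ' ^ 2 * Γ₀ ^ k ≤ 1 * 1 := mul_le_mul hh1 hGle1 hG.le zero_le_one
          _ = 1 := mul_one 1
        have h3 := mul_le_of_le_one_right (mul_nonneg hδ0 hspos.le) hμsq
        linarith [h3, mul_nonneg hδ0 hspos.le]
      linarith
  · -- the main case
    have hqσ : q ∈ σ := Finset.mem_erase.mpr ⟨fun h => hpq h.symm, hq⟩
    have hpτq : p ∈ τ.erase q := Finset.mem_erase.mpr ⟨hpq, hp⟩
    have hdpC : dist p C = R := hcirc p hpτq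
    set σ' := σ.erase q with hσ'def
    have hσ'card : σ'.card = k := by
      rw [hσ'def, Finset.card_erase_of_mem hqσ, hσcard]
      omega
    have hσ'ne : σ'.Nonempty := Finset.card_pos.mp (by omega)
    obtain ⟨u₀, hu₀⟩ := hσ'ne
    have hsphere : ∀ u ∈ σ', dist u C = R := by
      intro u hu
      exact hcirc u (Finset.mem_erase.mpr
        ⟨(Finset.mem_erase.mp hu).1, hσsub (Finset.mem_of_mem_erase hu)⟩)
    have hRnn : 0 ≤ R := (hsphere u₀ hu₀) ▸ dist_nonneg
    -- set up the orthogonal projection of q on the affine span of σ'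
    set E := affineSpan ℝ ((σ' : Set (EuclideanSpace ℝ (Fin m)))) with hE
    haveI : Nonempty E := ⟨⟨u₀, subset_affineSpan ℝ _ (by exact_mod_cast hu₀)⟩⟩
    set pr := (EuclideanGeometry.orthogonalProjection E q : EuclideanSpace ℝ (Fin m)) with hprdef
    have horth : q -ᵥ pr ∈ E.directionᗮ :=
      EuclideanGeometry.vsub_orthogonalProjection_mem_direction_orthogonal E q
    have hprE : pr ∈ E := EuclideanGeometry.orthogonalProjection_mem q
    set n := q - pr with hn
    set a := ‖n‖ with ha
    have h3 : ∀ u ∈ σ', ∀ v ∈ σ', ⟪n, u - v⟫ = 0 := by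
      intro u hu v hv
      have hd : u -ᵥ v ∈ E.direction :=
        AffineSubspace.vsub_mem_direction (subset_affineSpan ℝ _ (by exact_mod_cast hu))
          (subset_affineSpan ℝ _ (by exact_mod_cast hv))
      have h := (Submodule.mem_orthogonal E.direction (q -ᵥ pr)).mp horth _ hd
      rw [real_inner_comm] at h
      simpa [hn, vsub_eq_sub] using h
    have h4 : ∀ u ∈ σ', ⟪n, pr - u⟫ = 0 := by
      intro u hu
      have hd : pr -ᵥ u ∈ E.direction :=
        AffineSubspace.vsub_mem_direction hprE (subset_affineSpan ℝ _ (by exact_mod_cast hu))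
      have h := (Submodule.mem_orthogonal E.direction (q -ᵥ pr)).mp horth _ hd
      rw [real_inner_comm] at h
      simpa [hn, vsub_eq_sub] using h
    have hinq : ⟪n, q - u₀⟫ = a^2 := by
      have hsplit : q - u₀ = n + (pr - u₀) := by rw [hn]; abel
      rw [hsplit, inner_add_right, h4 u₀ hu₀, add_zero, real_inner_self_eq_norm_sq]
    -- lower bound on the altitude a
    set L := longEdge σ with hL
    have hLge : dist u₁ v₁ ≤ L := by
      rw [hL, longEdge]
      exact dist_le_diam_of_mem ((σ : Set (EuclideanSpace ℝ (Fin m))).toFinite.isBounded)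
        (by exact_mod_cast hu₁) (by exact_mod_cast hv₁)
    have hsL : s ≤ L := hsle.trans hLge
    have hLpos : 0 < L := hspos.trans_le hsL
    have hkL : 0 < (k:ℝ) * L := by
      have hk0' : (0:ℝ) < (k:ℝ) := by exact_mod_cast Nat.pos_of_ne_zero (by omega)
      exact mul_pos hk0' hLpos
    have hth := hthick p hp
    rw [← hσdef, thickness, if_neg (by omega)] at hth
    have hcs : ((σ.card : ℝ) - 1) = (k:ℝ) := by rw [hσcard]; push_cast; ring
    rw [hcs, ← hL] at hth
    have hAbdd : BddBelow ((fun x => altitude x σ) '' (σ : Set (EuclideanSpace ℝ (Fin m)))) :=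
      ((σ : Set (EuclideanSpace ℝ (Fin m))).toFinite.image _).bddBelow
    have hsInf_le : sInf ((fun x => altitude x σ) '' (σ : Set (EuclideanSpace ℝ (Fin m))))
        ≤ altitude q σ := csInf_le hAbdd ⟨q, by exact_mod_cast hqσ, rfl⟩
    have hsInf_ge : Γ₀ ^ k * ((k:ℝ) * L) ≤
        sInf ((fun x => altitude x σ) '' (σ : Set (EuclideanSpace ℝ (Fin m)))) :=
      (le_div_iff₀ hkL).mp hth
    have haltle : altitude q σ ≤ a := by
      have heq : altitude q σ = infDist q (E : Set (EuclideanSpace ℝ (Fin m))) := rfl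
      rw [heq, ha, hn, ← dist_eq_norm]
      exact infDist_le_dist_of_mem hprE
    have haS : Γ₀ ^ k * s ≤ a := by
      have h1 : Γ₀ ^ k * s ≤ Γ₀ ^ k * ((k:ℝ) * L) := by
        apply mul_le_mul_of_nonneg_left _ hG.le
        have hk' : (1:ℝ) ≤ (k:ℝ) := by exact_mod_cast hk1
        have := mul_nonneg (by linarith : (0:ℝ) ≤ (k:ℝ) - 1) hLpos.le
        linarith
      linarith
    have hapos : 0 < a := lt_of_lt_of_le (mul_pos hG hspos) haS
    -- the perturbed center
    set R' := dist q C with hR'def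
    set t := (R'^2 - R^2) / (2*a^2) with htdef
    set Cp := C + t • n with hCpdef
    have hc : ∀ u ∈ σ', ⟪n, u - C⟫ = ⟪n, u₀ - C⟫ := by
      intro u hu
      have hsplit : u - C = (u - u₀) + (u₀ - C) := by abel
      rw [hsplit, inner_add_right, h3 u hu u₀ hu₀, zero_add]
    have hdsq : ∀ u ∈ σ', dist u Cp ^ 2 = R^2 - 2*t*⟪n, u₀ - C⟫ + t^2*a^2 := by
      intro u hu
      rw [hCpdef, dist_sq_add_smul, hsphere u hu, hc u hu, ha]
    have hdq : dist q Cp ^ 2 = R'^2 - 2*t*(a^2 + ⟪n, u₀ - C⟫) + t^2*a^2 := by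
      rw [hCpdef, dist_sq_add_smul]
      have hqc : ⟪n, q - C⟫ = a^2 + ⟪n, u₀ - C⟫ := by
        have hsplit : q - C = (q - u₀) + (u₀ - C) := by abel
        rw [hsplit, inner_add_right, hinq]
      rw [hqc, ha, ← hR'def]
    have hta : 2 * t * a^2 = R'^2 - R^2 := by
      rw [htdef]; field_simp
    have hqq : dist q Cp ^ 2 = dist u₀ Cp ^ 2 := by
      rw [hdq, hdsq u₀ hu₀]
      linear_combination -hta
    set Rp := dist u₀ Cp with hRpdef
    have hcirc' : ∀ u ∈ σ, dist u Cp = Rp := by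
      intro u hu
      by_cases huq : u = q
      · subst huq
        have h := congrArg Real.sqrt hqq
        rwa [Real.sqrt_sq dist_nonneg, Real.sqrt_sq dist_nonneg] at h
      · have hu' : u ∈ σ' := Finset.mem_erase.mpr ⟨huq, hu⟩
        have h2 := (hdsq u hu').trans (hdsq u₀ hu₀).symm
        have h := congrArg Real.sqrt h2
        rwa [Real.sqrt_sq dist_nonneg, Real.sqrt_sq dist_nonneg] at h
    -- distance from Cp to C
    have hdCC : dist Cp C = |t| * a := by
      rw [hCpdef, dist_eq_norm, add_sub_cancel_left, norm_smul, Real.norm_eq_abs, ha]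
    have hη : |R' - R| ≤ δ₀ * (μ' * ε') := by
      rw [hR'def]
      calc |dist q C - R| ≤ δ₀ * μ' * ε' := hqC
      _ = δ₀ * (μ' * ε') := by ring
    have hηs : δ₀ * (μ' * ε') ≤ δ₀ * s := mul_le_mul_of_nonneg_left hslow hδ0
    have hR'le : R' ≤ R + δ₀ * s := by
      have := (abs_le.mp hη).2
      linarith
    have hR'nn : 0 ≤ R' := dist_nonneg
    have hub : ∀ u ∈ σ, dist u C ≤ R + δ₀ * s := by
      intro u hu
      by_cases huq : u = q
      · subst huq; rw [← hR'def]; exact hR'le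
      · rw [hsphere u (Finset.mem_erase.mpr ⟨huq, hu⟩)]
        linarith [mul_nonneg hδ0 hspos.le]
    have hs4R : s ≤ 4 * R := by
      have h1 : dist u₁ v₁ ≤ dist u₁ C + dist v₁ C := dist_triangle_right u₁ v₁ C
      have h2 := hub u₁ hu₁
      have h3 := hub v₁ hv₁
      have h4 : δ₀ * s ≤ (1/4) * s := mul_le_mul_of_nonneg_right hδ4 hspos.le
      linarith
    have hRpos : 0 < R := by linarith
    have habs : |R'^2 - R^2| ≤ (δ₀ * s) * (3 * R) := by
      have h1 : R'^2 - R^2 = (R' - R) * (R' + R) := by ring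
      rw [h1, abs_mul, abs_of_nonneg (by linarith : (0:ℝ) ≤ R' + R)]
      have h3 : R' + R ≤ 3 * R := by
        have h4 : δ₀ * s ≤ (1/4) * s := mul_le_mul_of_nonneg_right hδ4 hspos.le
        linarith
      exact mul_le_mul (hη.trans hηs) h3 (by linarith) (mul_nonneg hδ0 hspos.le)
    have hdCCb : dist Cp C * (2*a) ≤ (δ₀ * s) * (3 * R) := by
      rw [hdCC, htdef]
      calc |(R'^2 - R^2) / (2*a^2)| * a * (2*a)
          = |R'^2 - R^2| := by
            rw [abs_div, abs_of_pos (by positivity : (0:ℝ) < 2*a^2)]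
            field_simp
      _ ≤ (δ₀ * s) * (3 * R) := habs
    have hdCCnn : 0 ≤ dist Cp C := dist_nonneg
    -- key bound on dist Cp C times Γ₀^k
    have e3 : dist Cp C * Γ₀ ^ k ≤ (3/2) * δ₀ * R := by
      have f1 : dist Cp C * (Γ₀ ^ k * s) ≤ dist Cp C * a :=
        mul_le_mul_of_nonneg_left haS hdCCnn
      have e2 : dist Cp C * Γ₀ ^ k * s ≤ ((3/2) * δ₀ * R) * s := by
        linarith [f1, hdCCb]
      exact le_of_mul_le_mul_right e2 hspos
    have hbound2 : dist Cp C ≤ 3 * δ₀ * R / (μ' * Γ₀ ^ k) := by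
      rw [le_div_iff₀ (mul_pos hμ hG)]
      have g1 : dist Cp C * Γ₀ ^ k * μ' ≤ ((3/2) * δ₀ * R) * μ' :=
        mul_le_mul_of_nonneg_right e3 hμ.le
      have g2 : ((3/2) * δ₀ * R) * μ' ≤ (3/2) * δ₀ * R :=
        mul_le_of_le_one_right (by positivity) hμ1
      have g3 : 0 ≤ δ₀ * R := mul_nonneg hδ0 hRnn
      linarith
    refine ⟨Cp, Rp, hcirc', hbound2, ?_, ?_⟩
    · have hRple : Rp ≤ R + dist Cp C := by
        rw [hRpdef]
        calc dist u₀ Cp ≤ dist u₀ C + dist C Cp := dist_triangle u₀ C Cp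
        _ = R + dist Cp C := by rw [hsphere u₀ hu₀, dist_comm C Cp]
      have hring : (1 + 3 * δ₀ / (μ' * Γ₀ ^ k)) * R = R + 3 * δ₀ * R / (μ' * Γ₀ ^ k) := by
        ring
      rw [hring]
      linarith
    · have hb1 : |dist p Cp - R| ≤ dist Cp C := by
        have h := abs_dist_sub_le Cp C p
        rw [dist_comm Cp p, dist_comm C p, hdpC] at h
        exact h
      have hb2 : |R - Rp| ≤ dist Cp C := by
        have h := abs_dist_sub_le C Cp u₀
        rw [dist_comm C u₀, dist_comm Cp u₀, hsphere u₀ hu₀, ← hRpdef, dist_comm C Cp] at h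
        exact h
      have hb3 : |dist p Cp - Rp| ≤ 2 * dist Cp C := by
        calc |dist p Cp - Rp| = |(dist p Cp - R) + (R - Rp)| := by ring_nf
        _ ≤ |dist p Cp - R| + |R - Rp| := abs_add_le _ _
        _ ≤ 2 * dist Cp C := by linarith
      have hden2 : (0:ℝ) < μ' ^ 2 * Γ₀ ^ k := by positivity
      have hfinal : 2 * dist Cp C ≤ 6 * δ₀ / (μ' ^ 2 * Γ₀ ^ k) * s := by
        rw [div_mul_eq_mul_div, le_div_iff₀ hden2]
        have p1 : (dist Cp C * Γ₀ ^ k) * μ'^2 ≤ ((3/2) * δ₀ * R) * μ'^2 :=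
          mul_le_mul_of_nonneg_right e3 (sq_nonneg μ')
        have p2 : (δ₀ * μ') * (μ' * R) ≤ (δ₀ * μ') * s :=
          mul_le_mul_of_nonneg_left hμR (mul_nonneg hδ0 hμ.le)
        have p3 : μ' * (δ₀ * s) ≤ 1 * (δ₀ * s) :=
          mul_le_mul_of_nonneg_right hμ1 (mul_nonneg hδ0 hspos.le)
        linarith [p1, p2, p3, mul_nonneg hδ0 hspos.le]
      linarith
end
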